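/- Assuming the data processing inequality for D̃_β under partial trace and the duality S̃_α(A|B)_ρ = −S̃_β(A|C)_ρ for a purification ρ_{ABC} with 1/α + 1/β = 2, the Rényi Araki–Lieb lower bound holds: S̃_α(A|B)_ρ ≥ −S_β(A)_ρ for α, β ∈ [1/2, ∞) with 1/α + 1/β = 2. -/

import Mathlib

open scoped Matrix ComplexOrder Kronecker

/-- Matrix power via the functional calculus: for a Hermitian matrix `A`,
`mpow A r` is `U * diag (eigenvalues ^ r) * Uᴴ` (with the convention
`0 ^ r = 0` for `r ≠ 0`, i.e. powers are taken on the support). -/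
noncomputable def mpow {m : Type*} [Fintype m] [DecidableEq m]
    (A : Matrix m m ℂ) (r : ℝ) : Matrix m m ℂ :=
  if hA : A.IsHermitian then
    (hA.eigenvectorUnitary : Matrix m m ℂ) *
      Matrix.diagonal (fun i => ((hA.eigenvalues i ^ r : ℝ) : ℂ)) *
      (hA.eigenvectorUnitary : Matrix m m ℂ)ᴴ
  else 0

/-- The sandwiched trace functional `Q̃_α(ρ‖σ) = tr[(σ^γ ρ σ^γ)^α]`, with `γ = (1-α)/(2α)`. -/
noncomputable def Qt {m : Type*} [Fintype m] [DecidableEq m]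
    (α : ℝ) (ρ σ : Matrix m m ℂ) : ℂ :=
  Matrix.trace (mpow (mpow σ ((1 - α) / (2 * α)) * ρ * mpow σ ((1 - α) / (2 * α))) α)

/-- `ρ` is a density matrix. -/
def IsDensity {m : Type*} [Fintype m] (ρ : Matrix m m ℂ) : Prop :=
  ρ.PosSemidef ∧ ρ.trace = 1

/-- The α-sandwiched Rényi divergence `D̃_α(ρ‖σ)` (for a state `ρ`, so `tr ρ = 1`). -/
noncomputable def DA {m : Type*} [Fintype m] [DecidableEq m]
    (α : ℝ) (ρ σ : Matrix m m ℂ) : ℝ :=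
  (1 / (α - 1)) * Real.logb 2 (Qt α ρ σ).re

/-- Partial trace over the second tensor factor. -/
noncomputable def ptraceB {m d : Type*} [Fintype d]
    (ρ : Matrix (m × d) (m × d) ℂ) : Matrix m m ℂ :=
  Matrix.of fun i j => ∑ k, ρ (i, k) (j, k)

/-- `supp ρ ⊆ supp σ`, phrased via kernels. -/
def KerIncl {m : Type*} [Fintype m] (ρ σ : Matrix m m ℂ) : Prop :=
  ∀ v, σ.mulVec v = 0 → ρ.mulVec v = 0

/-- `ρ` and `σ` are not orthogonal: their supports overlap. -/
def NotPerp {m : Type*} [Fintype m] (ρ σ : Matrix m m ℂ) : Prop :=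
  ∃ v, v ≠ 0 ∧ v ∈ LinearMap.range ρ.mulVecLin ⊓ LinearMap.range σ.mulVecLin

/-- Finiteness condition for `D̃_α(ρ‖σ)`: `supp ρ ⊆ supp σ` if `α > 1`,
and `ρ ⊥̸ σ` if `α < 1`. -/
def Feas {m : Type*} [Fintype m] (α : ℝ) (ρ σ : Matrix m m ℂ) : Prop :=
  (1 < α → KerIncl ρ σ) ∧ (α < 1 → NotPerp ρ σ)

/-- The α-Rényi conditional entropy `S̃_α(A|B)_ρ = −min_{σ_B} D̃_α(ρ_{AB}‖1_A ⊗ σ_B)`,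
the minimum being over density matrices `σ_B` for which the divergence is finite. -/
noncomputable def condS {a b : ℕ} (α : ℝ)
    (ρAB : Matrix (Fin a × Fin b) (Fin a × Fin b) ℂ) : ℝ :=
  -sInf {x | ∃ σB : Matrix (Fin b) (Fin b) ℂ, IsDensity σB ∧
      Feas α ρAB ((1 : Matrix (Fin a) (Fin a) ℂ) ⊗ₖ σB) ∧
      x = DA α ρAB ((1 : Matrix (Fin a) (Fin a) ℂ) ⊗ₖ σB)}

/-- The Rényi entropy `S_α(ρ) = (1/(1−α)) log₂ tr(ρ^α)`. -/
noncomputable def SR {m : Type*} [Fintype m] [DecidableEq m]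
    (α : ℝ) (ρ : Matrix m m ℂ) : ℝ :=
  (1 / (1 - α)) * Real.logb 2 (Matrix.trace (mpow ρ α)).re

/-- Partial trace over the third factor of a tripartite system. -/
noncomputable def ptrC3 {a b c : Type*} [Fintype c]
    (M : Matrix (a × b × c) (a × b × c) ℂ) : Matrix (a × b) (a × b) ℂ :=
  Matrix.of fun p q => ∑ k, M (p.1, p.2, k) (q.1, q.2, k)

/-- Partial trace over the middle factor of a tripartite system. -/
noncomputable def ptrB3 {a b c : Type*} [Fintype b]
    (M : Matrix (a × b × c) (a × b × c) ℂ) : Matrix (a × c) (a × c) ℂ :=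
  Matrix.of fun p q => ∑ j, M (p.1, j, p.2) (q.1, j, q.2)

/-! By duality `S̃_α(A|B) = -S̃_β(A|C)`, so it suffices to show `S̃_β(A|C) ≤ S_β(A)`. For every
state `σ_C`, tracing out `C` sends `ρ_{AC}` to `ρ_A` and `1_A ⊗ σ_C` to `1_A`, and
`D̃_β(ρ_A‖1_A) = -S_β(A)`; data processing therefore bounds every divergence in the minimum from
below by `-S_β(A)`. The maximally mixed `σ_C` keeps the minimised set nonempty, so the bound
passes to its infimum. -/

open Matrix

section Power

variable {m : Type*} [Fintype m] [DecidableEq m]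

theorem Matrix.IsHermitian.mpow_eq_cfc {A : Matrix m m ℂ} (hA : A.IsHermitian) (r : ℝ) :
    mpow A r = cfc (fun x : ℝ => x ^ r) A := by
  rw [mpow, dif_pos hA, hA.cfc_eq, IsHermitian.cfc, Unitary.conjStarAlgAut_apply]
  rfl

@[simp]
theorem mpow_one_left (r : ℝ) : mpow (1 : Matrix m m ℂ) r = 1 := by
  simp [(isHermitian_one : (1 : Matrix m m ℂ).IsHermitian).mpow_eq_cfc]

theorem DA_one_right (β : ℝ) (ρ : Matrix m m ℂ) : DA β ρ 1 = -SR β ρ := by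
  rw [DA, SR, Qt, mpow_one_left, mul_one, one_mul, ← neg_sub, div_neg, neg_mul]

end Power

section States

variable {m : Type*} [Fintype m]

theorem IsDensity.ne_zero {ρ : Matrix m m ℂ} (hρ : IsDensity ρ) : ρ ≠ 0 := by
  rintro rfl
  simpa using hρ.2

theorem IsDensity.nonempty {ρ : Matrix m m ℂ} (hρ : IsDensity ρ) : Nonempty m := by
  by_contra h
  rw [not_nonempty_iff] at h
  simpa [Matrix.trace] using hρ.2

theorem isDensity_inv_card_smul_one [DecidableEq m] [Nonempty m] :
    IsDensity ((Fintype.card m : ℂ)⁻¹ • (1 : Matrix m m ℂ)) := by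
  refine ⟨PosSemidef.one.smul ?_, ?_⟩
  · simp
  · simp [trace_smul]

theorem feas_smul_one [DecidableEq m] (α : ℝ) {ρ : Matrix m m ℂ} (hρ : ρ ≠ 0) {t : ℂ}
    (ht : t ≠ 0) : Feas α ρ (t • 1) := by
  refine ⟨fun _ v hv => ?_, fun _ => ?_⟩
  · simp_all [smul_mulVec]
  · obtain ⟨u, hu⟩ : ∃ u, ρ *ᵥ u ≠ 0 := by
      by_contra! h
      exact hρ (ext_iff_mulVec.mpr fun v => by simp [h v])
    refine ⟨ρ *ᵥ u, hu, ⟨u, rfl⟩, t⁻¹ • ρ *ᵥ u, ?_⟩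
    simp [smul_smul, ht]

end States

section PartialTrace

variable {m d : Type*} [Fintype d]

theorem ptraceB_one_kronecker [DecidableEq m] {σ : Matrix d d ℂ} (hσ : σ.trace = 1) :
    ptraceB ((1 : Matrix m m ℂ) ⊗ₖ σ) = 1 := by
  ext i j
  by_cases h : i = j
  · subst h
    simpa [ptraceB, Matrix.trace] using hσ
  · simp [ptraceB, h]

theorem ptraceB_ptrB3 {a b c : Type*} [Fintype b] [Fintype c]
    (M : Matrix (a × b × c) (a × b × c) ℂ) : ptraceB (ptrB3 M) = ptraceB (ptrC3 M) := by
  ext i j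
  exact Finset.sum_comm

theorem isDensity_ptrB3_vecMulVec {a b c : Type*} [Fintype a] [Fintype b] [Fintype c]
    {ψ : a × b × c → ℂ} (hψ : star ψ ⬝ᵥ ψ = 1) : IsDensity (ptrB3 (vecMulVec ψ (star ψ))) := by
  set B : Matrix b (a × c) ℂ := of fun j p => star (ψ (p.1, j, p.2))
  have hB : ptrB3 (vecMulVec ψ (star ψ)) = Bᴴ * B := by
    ext p q
    simp [B, ptrB3, mul_apply, vecMulVec_apply]
  refine ⟨hB ▸ posSemidef_conjTranspose_mul_self B, ?_⟩
  rw [← hψ]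
  simp only [trace, diag, ptrB3, of_apply, vecMulVec_apply, dotProduct, Pi.star_apply,
    Fintype.sum_prod_type]
  refine Finset.sum_congr rfl fun i _ => Finset.sum_comm.trans ?_
  simp only [mul_comm]

end PartialTrace

theorem condS_le_SR_of_DPI {a c : ℕ} {β : ℝ} {ρ : Matrix (Fin a × Fin c) (Fin a × Fin c) ℂ}
    (hρ : IsDensity ρ)
    (hDPI : ∀ σ, σ.PosSemidef → Feas β ρ σ → DA β (ptraceB ρ) (ptraceB σ) ≤ DA β ρ σ) :
    condS β ρ ≤ SR β (ptraceB ρ) := by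
  have : Nonempty (Fin c) := hρ.nonempty.map Prod.snd
  rw [condS, neg_le, ← DA_one_right]
  refine le_csInf ⟨_, _, isDensity_inv_card_smul_one, ?_, rfl⟩ ?_
  · rw [kronecker_smul, one_kronecker_one]
    exact feas_smul_one β hρ.ne_zero (inv_ne_zero (Nat.cast_ne_zero.mpr Fintype.card_ne_zero))
  · rintro _ ⟨σ, hσ, hfeas, rfl⟩
    have hmono := hDPI _ (PosSemidef.one.kronecker hσ.1) hfeas
    rwa [ptraceB_one_kronecker hσ.2] at hmono

theorem renyi_araki_lieb_general {a b c : ℕ}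
    (α β : ℝ)
    (ψ : Fin a × Fin b × Fin c → ℂ) (hψ : star ψ ⬝ᵥ ψ = 1)
    (ρAB : Matrix (Fin a × Fin b) (Fin a × Fin b) ℂ)
    (hρAB : ρAB = ptrC3 (Matrix.vecMulVec ψ (star ψ)))
    (hdual : condS α ρAB = -condS β (ptrB3 (Matrix.vecMulVec ψ (star ψ))))
    (hDPI : ∀ (ρ' σ' : Matrix (Fin a × Fin c) (Fin a × Fin c) ℂ),
        IsDensity ρ' → σ'.PosSemidef → Feas β ρ' σ' →
        DA β (ptraceB ρ') (ptraceB σ') ≤ DA β ρ' σ') :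
    -SR β (ptraceB ρAB) ≤ condS α ρAB := by
  have hρAC := isDensity_ptrB3_vecMulVec hψ
  rw [hdual, neg_le_neg_iff, hρAB, ← ptraceB_ptrB3]
  exact condS_le_SR_of_DPI hρAC (hDPI _ · hρAC)

/-- The Rényi Araki–Lieb lower bound `S̃_α(A|B)_ρ ≥ −S_β(A)_ρ` for `1/α + 1/β = 2`,
assuming the duality `S̃_α(A|B)_ρ = −S̃_β(A|C)_ρ` for a purification `ρ_{ABC}` and the
data processing inequality for `D̃_β` under partial trace. -/
theorem renyi_araki_lieb {a b c : ℕ}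
    (α β : ℝ) (hαhalf : 1 / 2 ≤ α) (hβhalf : 1 / 2 ≤ β)
    (hdual' : 1 / α + 1 / β = 2)
    (ψ : Fin a × Fin b × Fin c → ℂ) (hψ : star ψ ⬝ᵥ ψ = 1)
    (ρAB : Matrix (Fin a × Fin b) (Fin a × Fin b) ℂ)
    (hρAB : ρAB = ptrC3 (Matrix.vecMulVec ψ (star ψ)))
    (hdual : condS α ρAB = -condS β (ptrB3 (Matrix.vecMulVec ψ (star ψ))))
    (hDPI : ∀ (ρ' σ' : Matrix (Fin a × Fin c) (Fin a × Fin c) ℂ),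
        IsDensity ρ' → σ'.PosSemidef → Feas β ρ' σ' →
        DA β (ptraceB ρ') (ptraceB σ') ≤ DA β ρ' σ') :
    -SR β (ptraceB ρAB) ≤ condS α ρAB :=
  renyi_araki_lieb_general α β ψ hψ ρAB hρAB hdual hDPI
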